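/- arXiv:1802.10376 — 4 statements merged into one kernel-verified Lean document; each statement's English description precedes it below -/
import Mathlib

section
/- For a task with execution time C > 0, period T > 0, and utilization U = C/T satisfying 0 ≤ U ≤ 1, the workload function work(Δ) = ⌊Δ/T⌋·C + min(C, Δ − ⌊Δ/T⌋·T) satisfies work(Δ) ≤ C − C·U + U·Δ for all Δ ≥ 0. -/
noncomputable def work (C T t : ℝ) : ℝ := ⌊t / T⌋ * C + min C (t - ⌊t / T⌋ * T)

theorem workload_linear_upper_bound
    (C T U : ℝ) (hC : 0 < C) (hT : 0 < T) (hU : U = C / T)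
    (hU0 : 0 ≤ U) (hU1 : U ≤ 1) :
    ∀ Δ : ℝ, 0 ≤ Δ → work C T Δ ≤ C - C * U + U * Δ := by
  intro Δ hΔ
  unfold work
  have huT : U * T = C := by rw [hU]; field_simp
  set n : ℝ := (⌊Δ / T⌋ : ℝ) with hn
  have h1 : n ≤ Δ / T := Int.floor_le _
  have h2 : Δ / T < n + 1 := Int.lt_floor_add_one _
  have h1' : n * T ≤ Δ := by
    rw [← le_div_iff₀ hT]; exact h1
  have h2' : Δ < (n + 1) * T := by
    rw [← div_lt_iff₀ hT]; exact h2
  rcases min_cases C (Δ - n * T) with ⟨hm, hle⟩ | ⟨hm, hlt⟩ <;> rw [hm]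
  · nlinarith [mul_nonneg hU0 (by linarith : (0:ℝ) ≤ Δ - n * T - C)]
  · nlinarith [mul_nonneg (by linarith : (0:ℝ) ≤ C - (Δ - n * T)) (by linarith : (0:ℝ) ≤ 1 - U)]
end

section
/- Let C, T, D be positive reals with C ≤ T, let U = C/T, let ρ satisfy U ≤ ρ ≤ 1, and let Δ > C. Define p₂ = ⌈(Δ−C)/T⌉ − 1 and q₂ = Δ − C − p₂·T. Then for every φ > 0, writing p₁ = ⌈φ/T⌉ − 1 and q₁ = φ − p₁·T, it holds that work(Δ + φ) − ρ·φ ≤ max( work(Δ), (p₂+1)·C + max(0, C − ρ·(T − q₂)) ), where work(t) = ⌊t/T⌋·C + min(C, t − ⌊t/T⌋·T). -/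
lemma work_add_T (C T u : ℝ) (hT : 0 < T) : work C T (u + T) = work C T u + C := by
  have h : (u + T) / T = u / T + 1 := by field_simp
  unfold work
  rw [h, Int.floor_add_one]
  push_cast
  have h2 : u + T - ((⌊u / T⌋ : ℝ) + 1) * T = u - (⌊u / T⌋ : ℝ) * T := by ring
  rw [h2]
  ring

lemma work_add_nat (C T u : ℝ) (hT : 0 < T) (n : ℕ) :
    work C T (u + n * T) = work C T u + n * C := by
  induction n with
  | zero => simp
  | succ k ih =>
    have h : u + ((k : ℕ) + 1 : ℕ) * T = (u + k * T) + T := by push_cast; ring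
    rw [h, work_add_T C T _ hT, ih]
    push_cast; ring

lemma key_s (C T ρ Δ : ℝ) (P : ℤ) (hC : 0 < C) (hT : 0 < T) (hCT : C ≤ T)
    (hρT : C ≤ ρ * T) (hρ0 : 0 < ρ) (hρu : ρ ≤ 1)
    (hq0 : 0 < Δ - C - ((P : ℝ) - 1) * T) (hqT : Δ - C - ((P : ℝ) - 1) * T ≤ T)
    (s : ℝ) (hs0 : 0 < s) (hsT : s ≤ T) :
    work C T (Δ + s) ≤ (((P : ℝ) - 1) + 1) * C +
      max 0 (C - ρ * (T - (Δ - C - ((P : ℝ) - 1) * T))) + ρ * s := by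
  set q₂ : ℝ := Δ - C - ((P : ℝ) - 1) * T with hq
  set m : ℤ := ⌊(Δ + s) / T⌋ with hm
  have hml : (m : ℝ) * T ≤ Δ + s := (le_div_iff₀ hT).mp (Int.floor_le ((Δ + s) / T))
  have hmu : Δ + s < ((m : ℝ) + 1) * T := (div_lt_iff₀ hT).mp (Int.lt_floor_add_one ((Δ + s) / T))
  have hwork : work C T (Δ + s) = (m : ℝ) * C + min C (Δ + s - (m : ℝ) * T) := rfl
  have hmax0 : (0 : ℝ) ≤ max 0 (C - ρ * (T - q₂)) := le_max_left _ _
  have hmax1 : C - ρ * (T - q₂) ≤ max 0 (C - ρ * (T - q₂)) := le_max_right _ _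
  have hmin1 : min C (Δ + s - (m : ℝ) * T) ≤ C := min_le_left _ _
  have hmin2 : min C (Δ + s - (m : ℝ) * T) ≤ Δ + s - (m : ℝ) * T := min_le_right _ _
  rw [hwork]
  rcases lt_trichotomy m P with hc | hc | hc
  · have hcR : (m : ℝ) ≤ (P : ℝ) - 1 := by
      have : m ≤ P - 1 := by omega
      exact_mod_cast this
    nlinarith [mul_nonneg hρ0.le hs0.le]
  · have hcR : (m : ℝ) = (P : ℝ) := by exact_mod_cast hc
    have harg : Δ + s - (m : ℝ) * T = C + q₂ + s - T := by rw [hcR, hq]; ring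
    rw [harg] at hmin1 hmin2 ⊢
    rcases le_total s (T - q₂) with h1 | h1
    · have h3 : (0:ℝ) ≤ (1 - ρ) * (T - q₂ - s) :=
        mul_nonneg (by linarith) (by linarith)
      rcases le_total 0 (C - ρ * (T - q₂)) with h2 | h2
      · nlinarith [h3]
      · nlinarith [h3]
    · have h3 : (0:ℝ) ≤ ρ * (s - (T - q₂)) :=
        mul_nonneg hρ0.le (by linarith)
      rcases le_total 0 (C - ρ * (T - q₂)) with h2 | h2
      · nlinarith [h3]
      · nlinarith [h3]
  · have hcR : (P : ℝ) + 1 ≤ (m : ℝ) := by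
      have : P + 1 ≤ m := by omega
      exact_mod_cast this
    nlinarith [mul_nonneg (by linarith : (0:ℝ) ≤ (m : ℝ) - ((P : ℝ) + 1)) (by linarith : (0:ℝ) ≤ T - C),
      mul_nonneg (sub_nonneg.2 hρu) (by linarith : (0:ℝ) ≤ 2 * T - q₂ - s)]

theorem light_carry_in_key_bound
    (C T D ρ Δ : ℝ) (hC : 0 < C) (hT : 0 < T) (hD : 0 < D) (hCT : C ≤ T)
    (hρl : C / T ≤ ρ) (hρu : ρ ≤ 1) (hΔ : C < Δ) :
    ∀ φ : ℝ, 0 < φ →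
      work C T (Δ + φ) - ρ * φ ≤
        max (work C T Δ)
          ((((⌈(Δ - C) / T⌉ : ℝ) - 1) + 1) * C +
            max 0 (C - ρ * (T - (Δ - C - ((⌈(Δ - C) / T⌉ : ℝ) - 1) * T)))) := by
  intro φ hφ
  have hρT : C ≤ ρ * T := by
    have := (div_le_iff₀ hT).mp hρl; linarith
  have hρ0 : 0 < ρ := lt_of_lt_of_le (div_pos hC hT) hρl
  set P : ℤ := ⌈(Δ - C) / T⌉ with hP
  have hq0 : 0 < Δ - C - ((P : ℝ) - 1) * T := by
    have h1 : ((P : ℝ) - 1) < (Δ - C) / T := by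
      have := Int.ceil_lt_add_one ((Δ - C) / T); rw [← hP] at this; linarith
    have := (lt_div_iff₀ hT).mp h1
    linarith
  have hqT : Δ - C - ((P : ℝ) - 1) * T ≤ T := by
    have h1 : (Δ - C) / T ≤ (P : ℝ) := by
      have := Int.le_ceil ((Δ - C) / T); rw [← hP] at this; exact_mod_cast this
    have := (div_le_iff₀ hT).mp h1
    linarith
  set n : ℤ := ⌈φ / T⌉ - 1 with hn
  have hn0 : 0 ≤ n := by
    have : (0 : ℤ) < ⌈φ / T⌉ := Int.ceil_pos.mpr (div_pos hφ hT)
    omega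
  set s : ℝ := φ - (n : ℝ) * T with hs
  have hs0 : 0 < s := by
    have h1 : (n : ℝ) < φ / T := by
      have := Int.ceil_lt_add_one (φ / T)
      have h2 : (n : ℝ) = (⌈φ / T⌉ : ℝ) - 1 := by rw [hn]; push_cast; ring
      linarith
    have := (lt_div_iff₀ hT).mp h1
    rw [hs]; linarith
  have hsT : s ≤ T := by
    have h1 : φ / T ≤ (n : ℝ) + 1 := by
      have := Int.le_ceil (φ / T)
      have h2 : (n : ℝ) = (⌈φ / T⌉ : ℝ) - 1 := by rw [hn]; push_cast; ring
      linarith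
    have := (div_le_iff₀ hT).mp h1
    rw [hs]; linarith
  have hcast : ((n.toNat : ℕ) : ℝ) = (n : ℝ) := by
    have := Int.toNat_of_nonneg hn0
    exact_mod_cast this
  have hwork : work C T (Δ + φ) = work C T (Δ + s) + (n.toNat : ℝ) * C := by
    have h1 : Δ + φ = (Δ + s) + (n.toNat : ℕ) * T := by
      rw [hcast, hs]; ring
    rw [h1, work_add_nat C T _ hT]
  have hkey := key_s C T ρ Δ P hC hT hCT hρT hρ0 hρu hq0 hqT s hs0 hsT
  have hnn : (n : ℝ) * C ≤ ρ * ((n : ℝ) * T) := by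
    have hn0R : (0 : ℝ) ≤ (n : ℝ) := by exact_mod_cast hn0
    nlinarith
  have hφeq : φ = s + (n : ℝ) * T := by rw [hs]; ring
  have hfin : work C T (Δ + φ) - ρ * φ ≤
      (((P : ℝ) - 1) + 1) * C + max 0 (C - ρ * (T - (Δ - C - ((P : ℝ) - 1) * T))) := by
    rw [hwork, hcast, hφeq]
    have : ρ * (s + (n : ℝ) * T) = ρ * s + ρ * ((n : ℝ) * T) := by ring
    rw [this]
    linarith
  exact le_trans hfin (le_max_right _ _)
end

section
/- Let C, T, D be positive reals with C ≤ T and C ≤ D, U = C/T ≤ ρ ≤ 1. Define for Δ > C: ω^light(Δ) = max( work(Δ), (p₂+1)·C + max(0, C − ρ·(T − q₂)) ) where p₂ = ⌈(Δ−C)/T⌉ − 1 and q₂ = Δ − C − p₂·T, and ω^light(Δ) = Δ for 0 < Δ ≤ C. Then ω^light(Δ) ≤ C − C·U + U·Δ for all Δ > 0. -/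
noncomputable def omegaLight (C T ρ Δ : ℝ) : ℝ :=
  if Δ ≤ C then Δ
  else
    max (work C T Δ)
      ((((⌈(Δ - C) / T⌉ : ℝ) - 1) + 1) * C +
        max 0 (C - ρ * (T - (Δ - C - ((⌈(Δ - C) / T⌉ : ℝ) - 1) * T))))

lemma min_le_convex_combination {α : Type*} [CommRing α] [LinearOrder α] [IsStrictOrderedRing α]
    (a b : α) {u : α} (hu0 : 0 ≤ u) (hu1 : u ≤ 1) :
    min a b ≤ (1 - u) * a + u * b := by
  rcases le_total a b with hab | hba
  · rw [min_eq_left hab]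
    nlinarith
  · rw [min_eq_right hba]
    nlinarith

lemma sub_ceil_div_sub_one_mul_mem_Ioc {α : Type*} [Field α] [LinearOrder α] [IsStrictOrderedRing α]
    [FloorRing α] {T : α} (hT : 0 < T) (x : α) :
    x - ((⌈x / T⌉ : α) - 1) * T ∈ Set.Ioc 0 T := by
  have hlt : (⌈x / T⌉ : α) - 1 < x / T := by linarith [Int.ceil_lt_add_one (x / T)]
  have hle : x / T ≤ ⌈x / T⌉ := Int.le_ceil _
  rw [lt_div_iff₀ hT] at hlt
  rw [div_le_iff₀ hT] at hle
  constructor <;> linarith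

section
variable {C T : ℝ}

lemma work_le_affine (hT : 0 < T) (hC : 0 ≤ C) (hCT : C ≤ T) (t : ℝ) :
    work C T t ≤ C - C * (C / T) + (C / T) * t := by
  have hUT : C / T * T = C := div_mul_cancel₀ C hT.ne'
  have hmin := min_le_convex_combination C (t - ⌊t / T⌋ * T) (div_nonneg hC hT.le)
    ((div_le_one hT).2 hCT)
  unfold work
  linear_combination hmin - (⌊t / T⌋ : ℝ) * hUT

lemma carry_in_le_affine {ρ Δ : ℝ} (hT : 0 < T) (hC : 0 ≤ C) (hρ : C / T ≤ ρ) (p : ℝ)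
    (hq0 : 0 ≤ Δ - C - p * T) (hqT : Δ - C - p * T ≤ T) :
    (p + 1) * C + max 0 (C - ρ * (T - (Δ - C - p * T))) ≤ C - C * (C / T) + (C / T) * Δ := by
  have hUT : C / T * T = C := div_mul_cancel₀ C hT.ne'
  have hcarry : max 0 (C - ρ * (T - (Δ - C - p * T))) ≤ C / T * (Δ - C - p * T) := by
    refine max_le (mul_nonneg (div_nonneg hC hT.le) hq0) ?_
    nlinarith [mul_le_mul_of_nonneg_right hρ (sub_nonneg.2 hqT)]
  linear_combination hcarry - p * hUT

end

theorem omegaLight_linear_upper_bound_general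
    (C T ρ : ℝ) (hC : 0 < C) (hT : 0 < T)
    (hCT : C ≤ T)
    (hρl : C / T ≤ ρ) :
    ∀ Δ : ℝ, 0 < Δ →
      omegaLight C T ρ Δ ≤ C - C * (C / T) + (C / T) * Δ := by
  intro Δ _
  unfold omegaLight
  split_ifs with hΔC
  · have hmin := min_le_convex_combination C Δ (div_nonneg hC.le hT.le) ((div_le_one hT).2 hCT)
    rw [min_eq_right hΔC] at hmin
    linarith
  · refine max_le (work_le_affine hT hC.le hCT Δ) ?_
    obtain ⟨hq0, hqT⟩ := sub_ceil_div_sub_one_mul_mem_Ioc hT (Δ - C)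
    exact carry_in_le_affine hT hC.le hρl _ hq0.le hqT

theorem omegaLight_linear_upper_bound
    (C T D ρ : ℝ) (hC : 0 < C) (hT : 0 < T) (hD : 0 < D)
    (hCT : C ≤ T) (hCD : C ≤ D)
    (hρl : C / T ≤ ρ) (hρu : ρ ≤ 1) :
    ∀ Δ : ℝ, 0 < Δ →
      omegaLight C T ρ Δ ≤ C - C * (C / T) + (C / T) * Δ :=
  omegaLight_linear_upper_bound_general C T ρ hC hT hCT hρl
end

section
/- Let C, T, D be positive reals with C ≤ T. Define ω^heavy(Δ) = work(Δ + D) where work(t) = ⌊t/T⌋·C + min(C, t − ⌊t/T⌋·T) and U = C/T. Then ω^heavy(Δ) ≤ C + U·D − C·U + U·Δ for all Δ ≥ 0. -/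
/-! Writing `t = n T + r` with `n = ⌊t / T⌋`, the `n` full periods contribute `n C = U (n T)`
exactly, and the remainder term `min C r` lies below the line through `(C, C)` of slope
`U = C / T ∈ [0, 1]`. -/

theorem min_le_add_mul_sub {C r u : ℝ} (hu₀ : 0 ≤ u) (hu₁ : u ≤ 1) :
    min C r ≤ C + u * (r - C) := by
  rcases le_total C r with h | h
  · rw [min_eq_left h]
    exact le_add_of_nonneg_right (mul_nonneg hu₀ (sub_nonneg.mpr h))
  · rw [min_eq_right h]
    nlinarith

theorem work_le_add_mul_sub {C T : ℝ} (hC : 0 ≤ C) (hT : 0 < T) (hCT : C ≤ T) (t : ℝ) :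
    work C T t ≤ C + C / T * (t - C) := by
  set n : ℝ := (⌊t / T⌋ : ℝ)
  have hperiods : n * C = C / T * (n * T) := by field_simp
  have hrem : min C (t - n * T) ≤ C + C / T * (t - n * T - C) :=
    min_le_add_mul_sub (div_nonneg hC hT.le) ((div_le_one hT).mpr hCT)
  calc work C T t = n * C + min C (t - n * T) := rfl
    _ ≤ C / T * (n * T) + (C + C / T * (t - n * T - C)) := by rw [hperiods]; gcongr
    _ = C + C / T * (t - C) := by ring

theorem omegaHeavy_linear_upper_bound_general
    (C T D : ℝ) (hC : 0 < C) (hT : 0 < T) (hCT : C ≤ T) :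
    ∀ Δ : ℝ, 0 ≤ Δ →
      work C T (Δ + D) ≤ C + (C / T) * D - C * (C / T) + (C / T) * Δ := by
  intro Δ _
  calc work C T (Δ + D) ≤ C + C / T * (Δ + D - C) := work_le_add_mul_sub hC.le hT hCT _
    _ = C + (C / T) * D - C * (C / T) + (C / T) * Δ := by ring

theorem omegaHeavy_linear_upper_bound
    (C T D : ℝ) (hC : 0 < C) (hT : 0 < T) (hD : 0 < D) (hCT : C ≤ T) :
    ∀ Δ : ℝ, 0 ≤ Δ →
      work C T (Δ + D) ≤ C + (C / T) * D - C * (C / T) + (C / T) * Δ :=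
  omegaHeavy_linear_upper_bound_general C T D hC hT hCT
end
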